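/- arXiv:math/0106189 — 2 statements merged into one kernel-verified Lean document; each statement's English description precedes it below -/
import Mathlib

section
/- Let q, l : ℤ → ℕ be functions with finite support such that ∑_{n ∈ ℤ} q(n) = ∑_{n ∈ ℤ} l(n) and l^♯(n) ≤ q^♯(n) for all n ∈ ℤ. If moreover ∑_{n ∈ ℤ} n·q(n) = ∑_{n ∈ ℤ} n·l(n), then q = l. -/
/-- Abel-summation auxiliary lemma. -/
lemma stmt2_aux (f : ℤ →₀ ℕ) (S : Finset ℤ) (a b : ℤ)
    (ha : ∀ s ∈ S, a ≤ s) (hb : ∀ s ∈ S, s < b) :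
    (∑ n ∈ Finset.Ico a b, ∑ m ∈ S, if m ≤ n then (f m : ℤ) else 0)
      = b * (∑ m ∈ S, (f m : ℤ)) - ∑ m ∈ S, (m : ℤ) * f m := by
  rw [Finset.sum_comm, Finset.mul_sum, ← Finset.sum_sub_distrib]
  apply Finset.sum_congr rfl
  intro m hm
  rw [← Finset.sum_filter]
  have hf : (Finset.Ico a b).filter (fun n => m ≤ n) = Finset.Ico m b := by
    ext x
    simp only [Finset.mem_filter, Finset.mem_Ico]
    have h1 := ha m hm
    have h2 := hb m hm
    omega
  rw [hf, Finset.sum_const, Int.card_Ico, nsmul_eq_mul,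
    Int.toNat_of_nonneg (by have := hb m hm; omega)]
  ring

/-- Equality case: if moreover `∑ n·q(n) = ∑ n·l(n)`,
then `q = l`. -/
theorem stmt2 (q l : ℤ →₀ ℕ)
    (hsum : ∑ n ∈ q.support, q n = ∑ n ∈ l.support, l n)
    (hsharp : ∀ n : ℤ,
      ∑ m ∈ l.support.filter (· ≤ n), l m ≤ ∑ m ∈ q.support.filter (· ≤ n), q m)
    (heq : ∑ n ∈ q.support, (n : ℤ) * q n = ∑ n ∈ l.support, (n : ℤ) * l n) :
    q = l := by
  classical
  set S : Finset ℤ := q.support ∪ l.support with hS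
  -- replace sums over supports by sums over S
  have hsub : ∀ (f : ℤ →₀ ℕ), f.support ⊆ S →
      ∀ (g : ℤ → ℕ) (_ : ∀ x, f x = 0 → g x = 0) (n : ℤ),
      ∑ m ∈ f.support.filter (· ≤ n), g m = ∑ m ∈ S.filter (· ≤ n), g m := by
    intro f hfS g hg n
    apply Finset.sum_subset (Finset.filter_subset_filter _ hfS)
    intro x hx hxn
    rw [Finset.mem_filter] at hx hxn
    have hx' : x ∉ f.support := fun h => hxn ⟨h, hx.2⟩
    exact hg x (Finsupp.notMem_support_iff.mp hx')
  have hsub' : ∀ (f : ℤ →₀ ℕ), f.support ⊆ S →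
      ∀ (g : ℤ → ℤ) (_ : ∀ x, f x = 0 → g x = 0),
      ∑ m ∈ f.support, g m = ∑ m ∈ S, g m := by
    intro f hfS g hg
    apply Finset.sum_subset hfS
    intro x _ hx'
    exact hg x (Finsupp.notMem_support_iff.mp hx')
  have hqS : q.support ⊆ S := Finset.subset_union_left
  have hlS : l.support ⊆ S := Finset.subset_union_right
  -- the partial-sum functions
  set F : ℤ → ℕ := fun n => ∑ m ∈ S.filter (· ≤ n), q m with hF
  set G : ℤ → ℕ := fun n => ∑ m ∈ S.filter (· ≤ n), l m with hG
  have hFq : ∀ n, F n = ∑ m ∈ q.support.filter (· ≤ n), q m := fun n =>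
    (hsub q hqS q (fun _ h => h) n).symm
  have hGl : ∀ n, G n = ∑ m ∈ l.support.filter (· ≤ n), l m := fun n =>
    (hsub l hlS l (fun _ h => h) n).symm
  have hle : ∀ n, G n ≤ F n := by
    intro n; rw [hFq, hGl]; exact hsharp n
  -- bounds
  obtain ⟨b0, hb0⟩ := S.exists_le
  obtain ⟨a0, ha0⟩ := (S.image (fun x => -x)).exists_le
  set a : ℤ := -a0 with hadef
  set b : ℤ := b0 + 1 with hbdef
  have ha : ∀ s ∈ S, a ≤ s := by
    intro s hs
    have := ha0 (-s) (Finset.mem_image_of_mem _ hs)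
    omega
  have hb : ∀ s ∈ S, s < b := by
    intro s hs; have := hb0 s hs; omega
  -- total sums over S
  have hqtot : ∀ n, b ≤ n → F n = ∑ m ∈ q.support, q m := by
    intro n hn
    have : S.filter (· ≤ n) = S := by
      apply Finset.filter_true_of_mem
      intro x hx; have := hb x hx; simp; omega
    rw [hF]; simp only [this]
    exact (Finset.sum_subset hqS (fun x _ hx => Finsupp.notMem_support_iff.mp hx)).symm
  have hltot : ∀ n, b ≤ n → G n = ∑ m ∈ l.support, l m := by
    intro n hn
    have : S.filter (· ≤ n) = S := by
      apply Finset.filter_true_of_mem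
      intro x hx; have := hb x hx; simp; omega
    rw [hG]; simp only [this]
    exact (Finset.sum_subset hlS (fun x _ hx => Finsupp.notMem_support_iff.mp hx)).symm
  -- Abel summation for both
  have habelq : (∑ n ∈ Finset.Ico a b, (F n : ℤ))
      = b * (∑ m ∈ S, (q m : ℤ)) - ∑ m ∈ S, (m : ℤ) * q m := by
    rw [← stmt2_aux q S a b ha hb]
    apply Finset.sum_congr rfl
    intro n _
    rw [hF]; push_cast [Finset.sum_filter]; rfl
  have habell : (∑ n ∈ Finset.Ico a b, (G n : ℤ))
      = b * (∑ m ∈ S, (l m : ℤ)) - ∑ m ∈ S, (m : ℤ) * l m := by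
    rw [← stmt2_aux l S a b ha hb]
    apply Finset.sum_congr rfl
    intro n _
    rw [hG]; push_cast [Finset.sum_filter]; rfl
  -- equality of the sums of partial sums
  have hq1 : ∑ m ∈ S, (q m : ℤ) = ∑ m ∈ S, (l m : ℤ) := by
    rw [← hsub' q hqS (fun m => (q m : ℤ)) (by intro x h; simp [h]),
      ← hsub' l hlS (fun m => (l m : ℤ)) (by intro x h; simp [h])]
    exact_mod_cast hsum
  have hq2 : ∑ m ∈ S, (m : ℤ) * q m = ∑ m ∈ S, (m : ℤ) * l m := by
    rw [← hsub' q hqS (fun m => (m : ℤ) * q m) (by intro x h; simp [h]),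
      ← hsub' l hlS (fun m => (m : ℤ) * l m) (by intro x h; simp [h])]
    exact heq
  have hsumFG : ∑ n ∈ Finset.Ico a b, F n = ∑ n ∈ Finset.Ico a b, G n := by
    have : (∑ n ∈ Finset.Ico a b, (F n : ℤ)) = ∑ n ∈ Finset.Ico a b, (G n : ℤ) := by
      rw [habelq, habell, hq1, hq2]
    exact_mod_cast this
  have hpt : ∀ n ∈ Finset.Ico a b, G n = F n :=
    (Finset.sum_eq_sum_iff_of_le (fun n _ => hle n)).mp hsumFG.symm
  -- F = G everywhere
  have key : ∀ n, F n = G n := by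
    intro n
    rcases lt_or_ge n a with h | h
    · have hqe : S.filter (· ≤ n) = ∅ := by
        apply Finset.filter_eq_empty_iff.mpr
        intro x hx; have := ha x hx; simp; omega
      rw [hF, hG]; simp only [hqe, Finset.sum_empty]
    · rcases lt_or_ge n b with h' | h'
      · exact (hpt n (Finset.mem_Ico.mpr ⟨h, h'⟩)).symm
      · rw [hqtot n h', hltot n h', hsum]
  -- recover q and l from F and G
  have hstep : ∀ (f : ℤ →₀ ℕ), f.support ⊆ S → ∀ n : ℤ,
      (∑ m ∈ S.filter (· ≤ n), f m) = (∑ m ∈ S.filter (· ≤ n - 1), f m) + f n := by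
    intro f hfS n
    rw [Finset.sum_filter, Finset.sum_filter]
    have : ∀ m ∈ S, (if m ≤ n then f m else 0)
        = (if m ≤ n - 1 then f m else 0) + (if m = n then f m else 0) := by
      intro m _
      split_ifs <;> omega
    rw [Finset.sum_congr rfl this, Finset.sum_add_distrib, Finset.sum_ite_eq' S n f]
    congr 1
    split_ifs with h
    · rfl
    · exact (Finsupp.notMem_support_iff.mp (fun hn => h (hfS hn))).symm
  ext n
  have h1 := hstep q hqS n
  have h2 := hstep l hlS n
  have k1 := key n
  have k2 := key (n - 1)
  simp only [hF, hG] at k1 k2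
  omega
end

section
/- Let R be a UFD, let I' and I'' be ideals of R, and let P', P'' ∈ R be nonzero elements with no common prime divisor (i.e., gcd(P', P'') is a unit) such that P' ∈ I'' and P'' ∈ I'. Let I = P''·I' + P'·I''. Then the sequence 0 → R → I' ⊕ I'' → I → 0 is exact, where the first map sends a to (a·P', −a·P'') and the second sends (b', b'') to b'·P'' + b''·P'. -/
open Pointwise

/-- Schwartau's liaison addition. Let `R` be a UFD, `I'`, `I''`
ideals, `P'`, `P''` nonzero with unit gcd, `P' ∈ I''`, `P'' ∈ I'`, and
`I = P''·I' + P'·I''`. Then `0 → R → I' ⊕ I'' → I → 0` is exact, where the first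
map is `a ↦ (a·P', −a·P'')` and the second is `(b', b'') ↦ b'·P'' + b''·P'`:
the first map is injective, the composite is zero, the kernel of the second map
is the image of the first, and the second map has image exactly `I`. -/
theorem stmt4 {R : Type*} [CommRing R] [IsDomain R] [UniqueFactorizationMonoid R]
    (I' I'' : Ideal R) (P' P'' : R) (hP' : P' ≠ 0) (hP'' : P'' ≠ 0)
    (hgcd : IsRelPrime P' P'')
    (hmem' : P' ∈ I'') (hmem'' : P'' ∈ I')
    (I : Ideal R) (hI : I = P'' • I' + P' • I'') :
    (Function.Injective fun a : R => ((a * P', -(a * P'')) : R × R)) ∧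
    (∀ a : R, (a * P') * P'' + (-(a * P'')) * P' = 0) ∧
    (∀ b' ∈ I', ∀ b'' ∈ I'', b' * P'' + b'' * P' = 0 →
      ∃ a : R, b' = a * P' ∧ b'' = -(a * P'')) ∧
    (∀ b' ∈ I', ∀ b'' ∈ I'', b' * P'' + b'' * P' ∈ I) ∧
    (∀ x ∈ I, ∃ b' ∈ I', ∃ b'' ∈ I'', b' * P'' + b'' * P' = x) := by
  refine ⟨?_, fun a => by ring, ?_, ?_, ?_⟩
  · intro a b hab
    simp only [Prod.mk.injEq] at hab
    exact mul_right_cancel₀ hP' hab.1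
  · intro b' hb' b'' hb'' heq
    have hdvd : P' ∣ P'' * b' := ⟨-b'', by linear_combination heq⟩
    obtain ⟨a, ha⟩ := hgcd.dvd_of_dvd_mul_left hdvd
    refine ⟨a, by rw [ha, mul_comm], ?_⟩
    have h0 : P' * (a * P'' + b'') = 0 := by
      rw [ha] at heq; linear_combination heq
    rcases mul_eq_zero.mp h0 with h | h
    · exact absurd h hP'
    · linear_combination h
  · intro b' hb' b'' hb''
    rw [hI]
    refine Ideal.add_mem _ (Ideal.mem_sup_left ?_) (Ideal.mem_sup_right ?_)
    · have := Submodule.smul_mem_pointwise_smul b' P'' I' hb'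
      simpa [smul_eq_mul, mul_comm] using this
    · have := Submodule.smul_mem_pointwise_smul b'' P' I'' hb''
      simpa [smul_eq_mul, mul_comm] using this
  · intro x hx
    rw [hI] at hx
    obtain ⟨y, hy, z, hz, rfl⟩ := Submodule.mem_sup.mp hx
    obtain ⟨b', hb', rfl⟩ := Set.mem_smul_set.mp hy
    obtain ⟨b'', hb'', rfl⟩ := Set.mem_smul_set.mp hz
    exact ⟨b', hb', b'', hb'', by simp [smul_eq_mul]; ring⟩
end
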